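/- arXiv:2504.12293 — 2 statements merged into one kernel-verified Lean document; each statement's English description precedes it below -/
import Mathlib

section
/- For functions f, g : ℝ^m → ℝ satisfying E[f(X)²] < ∞ and E[g(X)²] < ∞, and any r ∈ (0,1), one has (d/dr) E[f(Y_0) g(Y_r)] = − Σ_{i=1}^m Inf_i^{f,g}(r). -/
/-!
**Statement 11** (Proposition 2.4 of the paper, after Ahlberg–Deijfen–Sfragara; a
dynamical Russo–Margulis formula).

Let `F` be a distribution on `ℝ` (identified with the probability measure `μ` it
determines), let `X = (X(1), …, X(m))` be i.i.d. samples from `μ`, and for `r ∈ [0,1]` let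
`(Y_0, Y_r)` be coupled so that `Y_0 = X` and `Y_r` is obtained from `X` by independently
resampling each coordinate with probability `r`.  We realize this coupling explicitly on
the space `(Fin m → ℝ) × (Fin m → ℝ) × (Fin m → Bool)` carrying
`(pi μ) ⊗ (pi μ) ⊗ (pi Bernoulli(r))`: the first factor is `X`, the second the fresh
samples, the third the resampling selectors.

With `D_i^x f = f ∘ σ_i^x - ∫ f ∘ σ_i^y dF(y)` and the co-influence
`Inf_i^{f,g}(r) = ∫ E[D_i^x f(Y_0) · D_i^x g(Y_r)] dF(x)`, the theorem states that for
`f, g : ℝ^m → ℝ` with `E[f(X)²] < ∞` and `E[g(X)²] < ∞` and every `r ∈ (0,1)`,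
`(d/dr) E[f(Y_0) g(Y_r)] = - ∑_{i=1}^m Inf_i^{f,g}(r)`.
-/

open MeasureTheory ProbabilityTheory

noncomputable section

namespace RussoMargulis

/-- The Bernoulli distribution on `Bool` with success probability `r`. -/
def berMeasure (r : ℝ) : Measure Bool :=
  ENNReal.ofReal (1 - r) • Measure.dirac false + ENNReal.ofReal r • Measure.dirac true

/-- The coupling measure for `(X, X′, selectors)`: `X` and `X′` are independent samples
from `μ^{⊗m}` and the selectors are i.i.d. Bernoulli(`r`). -/
def coupling (μ : Measure ℝ) (m : ℕ) (r : ℝ) :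
    Measure ((Fin m → ℝ) × (Fin m → ℝ) × (Fin m → Bool)) :=
  (Measure.pi fun _ => μ).prod
    ((Measure.pi fun _ => μ).prod (Measure.pi fun _ => berMeasure r))

/-- `Y_0 = X`. -/
def Y0 {m : ℕ} (w : (Fin m → ℝ) × (Fin m → ℝ) × (Fin m → Bool)) : Fin m → ℝ := w.1

/-- `Y_r`: the `i`-th coordinate of `X` is replaced by the fresh sample `X′(i)` exactly
when the `i`-th selector is on. -/
def Yr {m : ℕ} (w : (Fin m → ℝ) × (Fin m → ℝ) × (Fin m → Bool)) : Fin m → ℝ :=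
  fun i => if w.2.2 i then w.2.1 i else w.1 i

/-- The operator `D_i^x f = f ∘ σ_i^x - ∫ f ∘ σ_i^y dF(y)`, where `σ_i^x` replaces the
`i`-th coordinate by `x`. -/
def Dop (μ : Measure ℝ) {m : ℕ} (f : (Fin m → ℝ) → ℝ) (i : Fin m) (x : ℝ)
    (v : Fin m → ℝ) : ℝ :=
  f (Function.update v i x) - ∫ y, f (Function.update v i y) ∂μ

/-- The co-influence `Inf_i^{f,g}(r) = ∫ E[D_i^x f(Y_0) · D_i^x g(Y_r)] dF(x)`. -/
def coInf (μ : Measure ℝ) {m : ℕ} (f g : (Fin m → ℝ) → ℝ) (i : Fin m) (r : ℝ) : ℝ :=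
  ∫ x, (∫ w, Dop μ f i x (Y0 w) * Dop μ g i x (Yr w) ∂coupling μ m r) ∂μ

end RussoMargulis

/-!
Conditioned on the resampling pattern `b`, the pair `(Y_0, Y_r)` is `(X, resample b (X, X'))`,
so `E[f(Y_0) g(Y_r)] = ∑_b ∏_j w_{b_j}(r) C(b)` with `C(b) = E[f(X) g(resample b (X, X'))]` and
`w_1(r) = r`, `w_0(r) = 1 - r`.  Differentiating this polynomial in `r` (the Russo–Margulis
formula on the discrete cube) gives `∑_i E_b[C(b[i ↦ 1]) - C(b[i ↦ 0])]`.  On the other side,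
writing `D_i^x f (v) = ∫ (f(v[i ↦ x]) - f(v[i ↦ y])) dF(y)` turns the product
`D_i^x f · D_i^x g` into an integral over two further independent copies `y, z` of the `i`-th
coordinate; expanding it gives four correlations, which by invariance of the product measure
under coordinate replacement are `C(b[i ↦ 0]) - C(b[i ↦ 1]) - C(b[i ↦ 1]) + C(b[i ↦ 1])`.
Square integrability of `f` and `g` makes every term integrable, so Fubini applies throughout.
-/

open Function

theorem MeasureTheory.MeasurePreserving.integral_comp_of_aestronglyMeasurable
    {α β : Type*} [MeasurableSpace α] [MeasurableSpace β] {ρ : Measure α} {ν : Measure β}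
    {T : α → β} (hT : MeasurePreserving T ρ ν) {h : β → ℝ} (hh : AEStronglyMeasurable h ν) :
    ∫ x, h (T x) ∂ρ = ∫ y, h y ∂ν := by
  rw [← hT.map_eq] at hh ⊢
  exact (integral_map hT.measurable.aemeasurable hh).symm

theorem MeasureTheory.measurePreserving_update {ι : Type*} [Fintype ι] [DecidableEq ι]
    {α : ι → Type*} [∀ j, MeasurableSpace (α j)] (μ : ∀ j, Measure (α j))
    [∀ j, SigmaFinite (μ j)] (i : ι) [IsProbabilityMeasure (μ i)] :
    MeasurePreserving (fun q : (∀ j, α j) × α i => update q.1 i q.2)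
      ((Measure.pi μ).prod (μ i)) (Measure.pi μ) := by
  refine ⟨measurable_update', (Measure.pi_eq fun A hA => ?_).symm⟩
  have hpre : (fun q : (∀ j, α j) × α i => update q.1 i q.2) ⁻¹' Set.univ.pi A =
      Set.univ.pi (update A i Set.univ) ×ˢ A i := by
    ext ⟨v, x⟩
    simp only [Set.mem_preimage, Set.mem_prod, Set.mem_univ_pi]
    refine ⟨fun h => ⟨fun j => ?_, by simpa using h i⟩, fun ⟨h, hx⟩ j => ?_⟩
    · rcases eq_or_ne j i with rfl | hj
      · simp
      · simpa [hj] using h j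
    · rcases eq_or_ne j i with rfl | hj
      · simpa using hx
      · simpa [hj] using h j
  rw [Measure.map_apply measurable_update' (.univ_pi hA), hpre, Measure.prod_prod, Measure.pi_pi,
    ← Finset.prod_erase_mul _ _ (Finset.mem_univ i),
    ← Finset.prod_erase_mul _ _ (Finset.mem_univ i)]
  simp only [update_self, measure_univ, mul_one]
  congr 1
  exact Finset.prod_congr rfl fun j hj => by rw [update_of_ne (Finset.ne_of_mem_erase hj)]

theorem MeasureTheory.measurePreserving_update_prod {ι β : Type*} [Fintype ι] [DecidableEq ι]
    [MeasurableSpace β] (ν : Measure β) [IsProbabilityMeasure ν] (i : ι) :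
    MeasurePreserving
      (fun q : ((ι → β) × (ι → β)) × (β × β) => (update q.1.1 i q.2.1, update q.1.2 i q.2.2))
      (((Measure.pi fun _ : ι => ν).prod (Measure.pi fun _ => ν)).prod (ν.prod ν))
      ((Measure.pi fun _ : ι => ν).prod (Measure.pi fun _ => ν)) := by
  have e := measurePreserving_arrowProdEquivProdArrow β β ι (fun _ => ν) (fun _ => ν)
  convert (e.comp (measurePreserving_update (fun _ : ι => ν.prod ν) i)).comp
    (e.symm.prod (MeasurePreserving.id (ν.prod ν))) using 1
  ext q j <;> by_cases hj : j = i <;>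
    simp [hj, MeasurableEquiv.arrowProdEquivProdArrow, Equiv.arrowProdEquivProdArrow]

namespace RussoMargulis

section Selectors

variable {ι β : Type*}

def resample (b : ι → Bool) (p : (ι → β) × (ι → β)) : ι → β :=
  fun j => if b j then p.2 j else p.1 j

lemma resample_update [DecidableEq ι] (b : ι → Bool) (c : Bool) (p : (ι → β) × (ι → β))
    (i : ι) (s t : β) :
    resample (update b i c) (update p.1 i s, update p.2 i t) =
      update (resample b p) i (if c then t else s) := by
  ext j
  rcases eq_or_ne j i with rfl | hj <;> simp [resample, *]

lemma measurePreserving_resample [Fintype ι] [MeasurableSpace β] (ν : Measure β)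
    [IsProbabilityMeasure ν] (b : ι → Bool) :
    MeasurePreserving (resample b) ((Measure.pi fun _ : ι => ν).prod (Measure.pi fun _ => ν))
      (Measure.pi fun _ => ν) := by
  have hcoord : ∀ j, MeasurePreserving (fun q : β × β => if b j then q.2 else q.1)
      (ν.prod ν) ν := fun j => by
    cases b j
    · exact measurePreserving_fst
    · exact measurePreserving_snd
  exact (measurePreserving_pi _ _ hcoord).comp
    (measurePreserving_arrowProdEquivProdArrow β β ι _ _).symm

def bernoulliWeight (s : ℝ) (c : Bool) : ℝ := if c then s else 1 - s

def selectorWeight [Fintype ι] (b : ι → Bool) (s : ℝ) : ℝ := ∏ j, bernoulliWeight s (b j)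

lemma bernoulliWeight_nonneg {s : ℝ} (hs0 : 0 ≤ s) (hs1 : s ≤ 1) (c : Bool) :
    0 ≤ bernoulliWeight s c := by
  cases c <;> simp [bernoulliWeight] <;> linarith

lemma selectorWeight_nonneg [Fintype ι] {s : ℝ} (hs0 : 0 ≤ s) (hs1 : s ≤ 1) (b : ι → Bool) :
    0 ≤ selectorWeight b s :=
  Finset.prod_nonneg fun j _ => bernoulliWeight_nonneg hs0 hs1 (b j)

lemma berMeasure_singleton (s : ℝ) (c : Bool) :
    berMeasure s {c} = ENNReal.ofReal (bernoulliWeight s c) := by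
  cases c <;> simp [berMeasure, bernoulliWeight]

instance (s : ℝ) : IsFiniteMeasure (berMeasure s) := by
  constructor
  simp only [berMeasure, Measure.add_apply, Measure.smul_apply, smul_eq_mul]
  finiteness

lemma pi_berMeasure_singleton [Fintype ι] {s : ℝ} (hs0 : 0 ≤ s) (hs1 : s ≤ 1) (b : ι → Bool) :
    (Measure.pi fun _ : ι => berMeasure s) {b} = ENNReal.ofReal (selectorWeight b s) := by
  simp_rw [Measure.pi_singleton, berMeasure_singleton, selectorWeight]
  exact (ENNReal.ofReal_prod_of_nonneg fun j _ => bernoulliWeight_nonneg hs0 hs1 (b j)).symm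

end Selectors

variable {m : ℕ} {μ : Measure ℝ}

lemma measurable_Yr : Measurable (Yr (m := m)) :=
  measurable_pi_lambda _ fun j => Measurable.ite
    (measurableSet_eq_fun (by fun_prop) measurable_const) (by fun_prop) (by fun_prop)

lemma coupling_eq_sum [SigmaFinite μ] (s : ℝ) :
    coupling μ m s = Measure.sum fun b : Fin m → Bool =>
      (Measure.pi fun _ => berMeasure s) {b} •
        ((Measure.pi fun _ => μ).prod (Measure.pi fun _ => μ)).map (fun p => (p.1, p.2, b)) := by
  conv_lhs => rw [coupling, ← Measure.sum_smul_dirac (Measure.pi fun _ => berMeasure s),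
    Measure.prod_sum_right, Measure.prod_sum_right]
  congr! 2 with b
  rw [Measure.prod_smul_right, Measure.prod_smul_right, Measure.prod_dirac,
    ← Measure.map_id (μ := Measure.pi fun _ : Fin m => μ), Measure.map_prod_map _ _ measurable_id
      (by fun_prop), Measure.map_id]
  rfl

lemma integral_coupling [SigmaFinite μ] {s : ℝ} (hs0 : 0 ≤ s) (hs1 : s ≤ 1)
    {F : (Fin m → ℝ) × (Fin m → ℝ) × (Fin m → Bool) → ℝ} (hF : Measurable F)
    (hFb : ∀ b, Integrable (fun p => F (p.1, p.2, b))
      ((Measure.pi fun _ => μ).prod (Measure.pi fun _ => μ))) :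
    ∫ w, F w ∂coupling μ m s = ∑ b, selectorWeight b s *
      ∫ p, F (p.1, p.2, b) ∂(Measure.pi fun _ => μ).prod (Measure.pi fun _ => μ) := by
  have hmk : ∀ b : Fin m → Bool,
      Measurable fun p : (Fin m → ℝ) × (Fin m → ℝ) => (p.1, p.2, b) := fun _ => by fun_prop
  rw [coupling_eq_sum, Measure.sum_fintype, integral_finsetSum_measure fun b _ =>
    ((integrable_map_measure hF.aestronglyMeasurable (hmk b).aemeasurable).2 (hFb b)).smul_measure
      (by simp [pi_berMeasure_singleton hs0 hs1])]
  refine Finset.sum_congr rfl fun b _ => ?_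
  rw [integral_smul_measure, integral_map (hmk b).aemeasurable hF.aestronglyMeasurable,
    pi_berMeasure_singleton hs0 hs1, ENNReal.toReal_ofReal (selectorWeight_nonneg hs0 hs1 b),
    smul_eq_mul]

lemma measurable_dop [SFinite μ] {f : (Fin m → ℝ) → ℝ} (hf : Measurable f) (i : Fin m)
    (x : ℝ) : Measurable (Dop μ f i x) :=
  (hf.comp measurable_update_left).sub
    (hf.comp measurable_update').stronglyMeasurable.integral_prod_right'.measurable

lemma dop_mul_dop_eq_integral [IsProbabilityMeasure μ] {f g : (Fin m → ℝ) → ℝ} {i : Fin m}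
    {x : ℝ} {v w : Fin m → ℝ} (hfv : Integrable (fun y => f (update v i y)) μ)
    (hgw : Integrable (fun z => g (update w i z)) μ) :
    Dop μ f i x v * Dop μ g i x w = ∫ yz : ℝ × ℝ,
      (f (update v i x) - f (update v i yz.1)) * (g (update w i x) - g (update w i yz.2))
        ∂μ.prod μ := by
  rw [integral_prod_mul (fun y => f (update v i x) - f (update v i y))
      (fun z => g (update w i x) - g (update w i z)),
    integral_sub (integrable_const _) hfv, integral_sub (integrable_const _) hgw]
  simp [Dop]

section Increments

variable [IsProbabilityMeasure μ] {f g : (Fin m → ℝ) → ℝ}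

def correlationIntegrand (f g : (Fin m → ℝ) → ℝ) (b : Fin m → Bool)
    (p : (Fin m → ℝ) × (Fin m → ℝ)) : ℝ :=
  f p.1 * g (resample b p)

def patternCorrelation (μ : Measure ℝ) (f g : (Fin m → ℝ) → ℝ) (b : Fin m → Bool) : ℝ :=
  ∫ p, correlationIntegrand f g b p ∂(Measure.pi fun _ => μ).prod (Measure.pi fun _ => μ)

lemma integrable_correlationIntegrand (hf : MemLp f 2 (Measure.pi fun _ => μ))
    (hg : MemLp g 2 (Measure.pi fun _ => μ)) (b : Fin m → Bool) :
    Integrable (correlationIntegrand f g b)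
      ((Measure.pi fun _ => μ).prod (Measure.pi fun _ => μ)) :=
  (hf.comp_measurePreserving measurePreserving_fst).integrable_mul
    (hg.comp_measurePreserving (measurePreserving_resample μ b))

def incrementProduct (f g : (Fin m → ℝ) → ℝ) (b : Fin m → Bool) (i : Fin m) (x : ℝ)
    (p : (Fin m → ℝ) × (Fin m → ℝ)) (y z : ℝ) : ℝ :=
  (f (update p.1 i x) - f (update p.1 i y)) *
    (g (update (resample b p) i x) - g (update (resample b p) i z))

lemma incrementProduct_eq (b : Fin m → Bool) (i : Fin m) (x : ℝ)
    (p : (Fin m → ℝ) × (Fin m → ℝ)) (y z : ℝ) :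
    incrementProduct f g b i x p y z =
      correlationIntegrand f g (update b i false) (update p.1 i x, update p.2 i y)
      - correlationIntegrand f g (update b i true) (update p.1 i x, update p.2 i z)
      - correlationIntegrand f g (update b i true) (update p.1 i y, update p.2 i x)
      + correlationIntegrand f g (update b i true) (update p.1 i y, update p.2 i z) := by
  simp only [incrementProduct, correlationIntegrand, resample_update, Bool.false_eq_true,
    if_true, if_false]
  ring

lemma measurePreserving_update_comp (i : Fin m) {T : ℝ × ℝ × ℝ → ℝ × ℝ}
    (hT : MeasurePreserving T (μ.prod (μ.prod μ)) (μ.prod μ)) :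
    MeasurePreserving (fun ω : (ℝ × ((Fin m → ℝ) × (Fin m → ℝ))) × (ℝ × ℝ) =>
        (update ω.1.2.1 i (T (ω.1.1, ω.2)).1, update ω.1.2.2 i (T (ω.1.1, ω.2)).2))
      ((μ.prod ((Measure.pi fun _ => μ).prod (Measure.pi fun _ => μ))).prod (μ.prod μ))
      ((Measure.pi fun _ => μ).prod (Measure.pi fun _ => μ)) := by
  have hσ := (measurePreserving_prodAssoc _ _ (μ.prod μ)).comp
    ((Measure.measurePreserving_swap (μ := μ)
      (ν := (Measure.pi fun _ : Fin m => μ).prod (Measure.pi fun _ : Fin m => μ))).prod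
        (MeasurePreserving.id (μ.prod μ)))
  exact ((measurePreserving_update_prod μ i).comp ((MeasurePreserving.id _).prod hT)).comp hσ

variable (μ) in
lemma measurePreserving_pairs :
    MeasurePreserving (fun s : ℝ × ℝ × ℝ => (s.1, s.2.1)) (μ.prod (μ.prod μ)) (μ.prod μ) ∧
    MeasurePreserving (fun s : ℝ × ℝ × ℝ => (s.1, s.2.2)) (μ.prod (μ.prod μ)) (μ.prod μ) ∧
    MeasurePreserving (fun s : ℝ × ℝ × ℝ => (s.2.1, s.1)) (μ.prod (μ.prod μ)) (μ.prod μ) ∧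
    MeasurePreserving (fun s : ℝ × ℝ × ℝ => (s.2.1, s.2.2)) (μ.prod (μ.prod μ)) (μ.prod μ) :=
  have h := (MeasurePreserving.id μ).prod (measurePreserving_fst (μ := μ) (ν := μ))
  ⟨h, (MeasurePreserving.id μ).prod measurePreserving_snd,
    Measure.measurePreserving_swap.comp h, measurePreserving_snd⟩

lemma integrable_correlationIntegrand_update_comp (hf : MemLp f 2 (Measure.pi fun _ => μ))
    (hg : MemLp g 2 (Measure.pi fun _ => μ)) (b : Fin m → Bool) (i : Fin m)
    {T : ℝ × ℝ × ℝ → ℝ × ℝ} (hT : MeasurePreserving T (μ.prod (μ.prod μ)) (μ.prod μ)) :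
    Integrable (fun ω : (ℝ × ((Fin m → ℝ) × (Fin m → ℝ))) × (ℝ × ℝ) => correlationIntegrand f g b
        (update ω.1.2.1 i (T (ω.1.1, ω.2)).1, update ω.1.2.2 i (T (ω.1.1, ω.2)).2))
      ((μ.prod ((Measure.pi fun _ => μ).prod (Measure.pi fun _ => μ))).prod (μ.prod μ)) :=
  (measurePreserving_update_comp i hT).integrable_comp_of_integrable
    (integrable_correlationIntegrand hf hg b)

lemma integral_correlationIntegrand_update_comp (hf : MemLp f 2 (Measure.pi fun _ => μ))
    (hg : MemLp g 2 (Measure.pi fun _ => μ)) (b : Fin m → Bool) (i : Fin m)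
    {T : ℝ × ℝ × ℝ → ℝ × ℝ} (hT : MeasurePreserving T (μ.prod (μ.prod μ)) (μ.prod μ)) :
    ∫ ω : (ℝ × ((Fin m → ℝ) × (Fin m → ℝ))) × (ℝ × ℝ), correlationIntegrand f g b
        (update ω.1.2.1 i (T (ω.1.1, ω.2)).1, update ω.1.2.2 i (T (ω.1.1, ω.2)).2)
        ∂(μ.prod ((Measure.pi fun _ => μ).prod (Measure.pi fun _ => μ))).prod (μ.prod μ) =
      patternCorrelation μ f g b :=
  (measurePreserving_update_comp i hT).integral_comp_of_aestronglyMeasurable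
    (integrable_correlationIntegrand hf hg b).aestronglyMeasurable

lemma integrable_incrementProduct (hf : MemLp f 2 (Measure.pi fun _ => μ))
    (hg : MemLp g 2 (Measure.pi fun _ => μ)) (b : Fin m → Bool) (i : Fin m) :
    Integrable (fun ω : (ℝ × ((Fin m → ℝ) × (Fin m → ℝ))) × (ℝ × ℝ) =>
        incrementProduct f g b i ω.1.1 ω.1.2 ω.2.1 ω.2.2)
      ((μ.prod ((Measure.pi fun _ => μ).prod (Measure.pi fun _ => μ))).prod (μ.prod μ)) := by
  obtain ⟨hxy, hxz, hyx, hyz⟩ := measurePreserving_pairs μ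
  have h := integrable_correlationIntegrand_update_comp hf hg
  simp_rw [incrementProduct_eq]
  exact (((h _ i hxy).sub (h _ i hxz)).sub (h _ i hyx)).add (h _ i hyz)

lemma integral_incrementProduct (hf : MemLp f 2 (Measure.pi fun _ => μ))
    (hg : MemLp g 2 (Measure.pi fun _ => μ)) (b : Fin m → Bool) (i : Fin m) :
    ∫ ω : (ℝ × ((Fin m → ℝ) × (Fin m → ℝ))) × (ℝ × ℝ),
        incrementProduct f g b i ω.1.1 ω.1.2 ω.2.1 ω.2.2
        ∂(μ.prod ((Measure.pi fun _ => μ).prod (Measure.pi fun _ => μ))).prod (μ.prod μ) =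
      patternCorrelation μ f g (update b i false) - patternCorrelation μ f g (update b i true) := by
  obtain ⟨hxy, hxz, hyx, hyz⟩ := measurePreserving_pairs μ
  have i₁ := integrable_correlationIntegrand_update_comp hf hg (update b i false) i hxy
  have i₂ := integrable_correlationIntegrand_update_comp hf hg (update b i true) i hxz
  have i₃ := integrable_correlationIntegrand_update_comp hf hg (update b i true) i hyx
  have i₄ := integrable_correlationIntegrand_update_comp hf hg (update b i true) i hyz
  have v₁ := integral_correlationIntegrand_update_comp hf hg (update b i false) i hxy
  have v₂ := integral_correlationIntegrand_update_comp hf hg (update b i true) i hxz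
  have v₃ := integral_correlationIntegrand_update_comp hf hg (update b i true) i hyx
  have v₄ := integral_correlationIntegrand_update_comp hf hg (update b i true) i hyz
  dsimp only at i₁ i₂ i₃ i₄ v₁ v₂ v₃ v₄
  simp_rw [incrementProduct_eq]
  rw [integral_add (by exact (i₁.sub i₂).sub i₃) i₄, integral_sub (by exact i₁.sub i₂) i₃,
    integral_sub i₁ i₂, v₁, v₂, v₃, v₄]
  ring

lemma ae_integrable_update {φ : (Fin m → ℝ) → ℝ} (hφ : Integrable φ (Measure.pi fun _ => μ))
    (i : Fin m) : ∀ᵐ v ∂(Measure.pi fun _ => μ), Integrable (fun y => φ (update v i y)) μ :=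
  ((measurePreserving_update (fun _ => μ) i).integrable_comp_of_integrable hφ).prod_right_ae

lemma dop_mul_dop_ae_eq_integral (hf : MemLp f 2 (Measure.pi fun _ => μ))
    (hg : MemLp g 2 (Measure.pi fun _ => μ)) (b : Fin m → Bool) (i : Fin m) :
    (fun q : ℝ × ((Fin m → ℝ) × (Fin m → ℝ)) =>
        Dop μ f i q.1 q.2.1 * Dop μ g i q.1 (resample b q.2))
      =ᵐ[μ.prod ((Measure.pi fun _ => μ).prod (Measure.pi fun _ => μ))]
        fun q => ∫ yz : ℝ × ℝ, incrementProduct f g b i q.1 q.2 yz.1 yz.2 ∂μ.prod μ := by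
  have hv : MeasurePreserving (fun q : ℝ × ((Fin m → ℝ) × (Fin m → ℝ)) => q.2.1)
      (μ.prod ((Measure.pi fun _ => μ).prod (Measure.pi fun _ => μ))) (Measure.pi fun _ => μ) :=
    measurePreserving_fst.comp measurePreserving_snd
  have hw : MeasurePreserving (fun q : ℝ × ((Fin m → ℝ) × (Fin m → ℝ)) => resample b q.2)
      (μ.prod ((Measure.pi fun _ => μ).prod (Measure.pi fun _ => μ))) (Measure.pi fun _ => μ) :=
    (measurePreserving_resample μ b).comp measurePreserving_snd
  filter_upwards [hv.quasiMeasurePreserving.ae (ae_integrable_update (hf.integrable one_le_two) i),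
    hw.quasiMeasurePreserving.ae (ae_integrable_update (hg.integrable one_le_two) i)]
    with q hfq hgq
  exact dop_mul_dop_eq_integral hfq hgq

lemma integrable_dop_mul_dop (hf : MemLp f 2 (Measure.pi fun _ => μ))
    (hg : MemLp g 2 (Measure.pi fun _ => μ)) (b : Fin m → Bool) (i : Fin m) :
    Integrable (fun q : ℝ × ((Fin m → ℝ) × (Fin m → ℝ)) =>
        Dop μ f i q.1 q.2.1 * Dop μ g i q.1 (resample b q.2))
      (μ.prod ((Measure.pi fun _ => μ).prod (Measure.pi fun _ => μ))) :=
  (integrable_incrementProduct hf hg b i).integral_prod_left.congr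
    (dop_mul_dop_ae_eq_integral hf hg b i).symm

lemma integral_dop_mul_dop (hf : MemLp f 2 (Measure.pi fun _ => μ))
    (hg : MemLp g 2 (Measure.pi fun _ => μ)) (b : Fin m → Bool) (i : Fin m) :
    ∫ q : ℝ × ((Fin m → ℝ) × (Fin m → ℝ)),
        Dop μ f i q.1 q.2.1 * Dop μ g i q.1 (resample b q.2)
        ∂μ.prod ((Measure.pi fun _ => μ).prod (Measure.pi fun _ => μ)) =
      patternCorrelation μ f g (update b i false) - patternCorrelation μ f g (update b i true) := by
  rw [integral_congr_ae (dop_mul_dop_ae_eq_integral hf hg b i)]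
  exact (integral_prod _ (integrable_incrementProduct hf hg b i)).symm.trans
    (integral_incrementProduct hf hg b i)

lemma coInf_eq_sum (hf : Measurable f) (hg : Measurable g)
    (hf2 : MemLp f 2 (Measure.pi fun _ => μ)) (hg2 : MemLp g 2 (Measure.pi fun _ => μ))
    (i : Fin m) {r : ℝ} (hr0 : 0 ≤ r) (hr1 : r ≤ 1) :
    coInf μ f g i r = ∑ b, selectorWeight b r *
      (patternCorrelation μ f g (update b i false) -
        patternCorrelation μ f g (update b i true)) := by
  have hK := fun b => integrable_dop_mul_dop hf2 hg2 b i
  calc coInf μ f g i r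
      = ∫ x, ∑ b, selectorWeight b r * ∫ p, Dop μ f i x p.1 * Dop μ g i x (resample b p)
          ∂(Measure.pi fun _ => μ).prod (Measure.pi fun _ => μ) ∂μ := by
        refine integral_congr_ae ?_
        filter_upwards [ae_all_iff.2 fun b => (hK b).prod_right_ae] with x hx
        exact integral_coupling hr0 hr1
          ((measurable_dop hf i x).comp measurable_fst |>.mul
            ((measurable_dop hg i x).comp measurable_Yr)) hx
    _ = ∑ b, selectorWeight b r * ∫ x, ∫ p, Dop μ f i x p.1 * Dop μ g i x (resample b p)
          ∂(Measure.pi fun _ => μ).prod (Measure.pi fun _ => μ) ∂μ := by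
        rw [integral_finsetSum _ fun b _ => (hK b).integral_prod_left.const_mul _]
        simp_rw [integral_const_mul]
    _ = _ := by
        simp_rw [← integral_prod _ (hK _), integral_dop_mul_dop hf2 hg2]

end Increments

section Derivative

variable {ι : Type*} [Fintype ι] [DecidableEq ι]

lemma hasDerivAt_bernoulliWeight (c : Bool) (r : ℝ) :
    HasDerivAt (fun s => bernoulliWeight s c) (if c then 1 else -1) r := by
  cases c
  · simpa [bernoulliWeight] using (hasDerivAt_id' r).const_sub 1
  · simpa [bernoulliWeight] using hasDerivAt_id' r

lemma hasDerivAt_selectorWeight (b : ι → Bool) (r : ℝ) :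
    HasDerivAt (fun s => selectorWeight b s)
      (∑ i, (∏ k ∈ Finset.univ.erase i, bernoulliWeight r (b k)) * if b i then 1 else -1) r := by
  have h := HasDerivAt.fun_finsetProd (u := Finset.univ) fun i _ =>
    hasDerivAt_bernoulliWeight (b i) r
  simp only [smul_eq_mul] at h
  exact h

lemma sum_selectorWeight_mul_sub (C : (ι → Bool) → ℝ) (i : ι) (r : ℝ) :
    ∑ b, selectorWeight b r * (C (update b i true) - C (update b i false)) =
      ∑ b, ((∏ k ∈ Finset.univ.erase i, bernoulliWeight r (b k)) * if b i then 1 else -1) *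
        C b := by
  let e := (Equiv.piSplitAt i fun _ => Bool).symm
  have he_self : ∀ c b', e (c, b') i = c := by simp [e, Equiv.piSplitAt]
  have he_ne : ∀ c b' k (hk : k ≠ i), e (c, b') k = b' ⟨k, hk⟩ := by
    simp +contextual [e, Equiv.piSplitAt]
  have he_update : ∀ c d b', update (e (c, b')) i d = e (d, b') := by
    intro c d b'
    ext k
    rcases eq_or_ne k i with rfl | hk
    · simp [he_self]
    · simp [hk, he_ne]
  have he_rest : ∀ c b', ∏ k ∈ Finset.univ.erase i, bernoulliWeight r (e (c, b') k) =
      ∏ j, bernoulliWeight r (b' j) := by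
    intro c b'
    rw [Finset.prod_subtype (Finset.univ.erase i) (p := (· ≠ i)) (by simp)]
    exact Finset.prod_congr rfl fun j _ => by rw [he_ne c b' j j.2]
  have hweight : ∀ b : ι → Bool, selectorWeight b r =
      bernoulliWeight r (b i) * ∏ k ∈ Finset.univ.erase i, bernoulliWeight r (b k) :=
    fun b => (Finset.mul_prod_erase _ _ (Finset.mem_univ i)).symm
  simp_rw [hweight]
  rw [← e.sum_comp, ← e.sum_comp, Fintype.sum_prod_type_right, Fintype.sum_prod_type_right]
  refine Finset.sum_congr rfl fun b' _ => ?_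
  simp only [Fintype.sum_bool, he_self, he_update]
  rw [he_rest, he_rest]
  simp only [bernoulliWeight, if_true, if_false, Bool.false_eq_true]
  ring

/-- The Russo–Margulis formula on the discrete cube. -/
lemma hasDerivAt_sum_selectorWeight_mul (C : (ι → Bool) → ℝ) (r : ℝ) :
    HasDerivAt (fun s => ∑ b, selectorWeight b s * C b)
      (∑ i, ∑ b, selectorWeight b r * (C (update b i true) - C (update b i false))) r := by
  simp_rw [sum_selectorWeight_mul_sub]
  rw [Finset.sum_comm]
  simp_rw [← Finset.sum_mul]
  exact HasDerivAt.fun_sum fun b _ => (hasDerivAt_selectorWeight b r).mul_const (C b)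

end Derivative

end RussoMargulis

open RussoMargulis in
/-- for square-integrable `f, g` and `r ∈ (0,1)`,
`(d/dr) E[f(Y_0) g(Y_r)] = - ∑_{i=1}^m Inf_i^{f,g}(r)`. -/
theorem deriv_correlation_eq_neg_sum_coinfluence
    (m : ℕ) (μ : Measure ℝ) [IsProbabilityMeasure μ]
    (f g : (Fin m → ℝ) → ℝ) (hf : Measurable f) (hg : Measurable g)
    (hf2 : Integrable (fun v => (f v) ^ 2) (Measure.pi fun _ : Fin m => μ))
    (hg2 : Integrable (fun v => (g v) ^ 2) (Measure.pi fun _ : Fin m => μ))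
    (r : ℝ) (hr : r ∈ Set.Ioo (0 : ℝ) 1) :
    HasDerivAt (fun s => ∫ w, f (Y0 w) * g (Yr w) ∂coupling μ m s)
      (-∑ i : Fin m, coInf μ f g i r) r := by
  obtain ⟨hr0, hr1⟩ := hr
  have hfL2 := (memLp_two_iff_integrable_sq hf.aestronglyMeasurable).2 hf2
  have hgL2 := (memLp_two_iff_integrable_sq hg.aestronglyMeasurable).2 hg2
  have hcorr : (fun s => ∫ w, f (Y0 w) * g (Yr w) ∂coupling μ m s) =ᶠ[nhds r]
      fun s => ∑ b, selectorWeight b s * patternCorrelation μ f g b := by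
    filter_upwards [Ioo_mem_nhds hr0 hr1] with s hs
    exact integral_coupling hs.1.le hs.2.le ((hf.comp measurable_fst).mul (hg.comp measurable_Yr))
      (integrable_correlationIntegrand hfL2 hgL2)
  have hcoInf : -∑ i, coInf μ f g i r = ∑ i, ∑ b, selectorWeight b r *
      (patternCorrelation μ f g (update b i true) -
        patternCorrelation μ f g (update b i false)) := by
    simp_rw [coInf_eq_sum hf hg hfL2 hgL2 _ hr0.le hr1.le, ← Finset.sum_neg_distrib, ← mul_neg,
      neg_sub]
  rw [hcoInf]
  exact (hasDerivAt_sum_selectorWeight_mul _ r).congr_of_eventuallyEq hcorr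
end
end

section
/- There exist constants C, c > 0 such that the following holds for every i, m ∈ ℤ and every n ∈ ℕ. Let T be the BLPP built from the Brownian motions {W_k}_{k∈ℤ}, and let T̃ be the BLPP built from the modified family {W̃_k} in which only the increment of W_m over [i, i+1] is replaced by an independent fresh standard Brownian motion X̃ on [0,1] (that is, W̃_k = W_k for k ≠ m, W̃_m(i+x) − W̃_m(i) = X̃(x) for x ∈ [0,1], and all other increments of W̃_m agree with those of W_m). Then for all r > 0, P( |T̃_𝟎^𝐧 − T_𝟎^𝐧| ≥ r ) ≤ C e^{−c r²}. -/
/-!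
Self-contained formalization of (static and dynamical) Brownian last passage percolation
(BLPP), following the conventions of the paper "Exceptional times when bigeodesics exist
in dynamical last passage percolation".

* The static environment is a family `{W_k}_{k ∈ ℤ}` of i.i.d. two-sided standard Brownian
  motions.
* A staircase from `(a, m)` to `(b, n)` (with `a ≤ b ∈ ℝ`, `m ≤ n ∈ ℤ`) is encoded by a
  nondecreasing sequence `z : ℤ → ℝ` with `z (m-1) = a` and `z n = b`; its weight is
  `∑_{i=m}^n (W_i(z_i) - W_i(z_{i-1}))`; the last passage time `lpt` is the supremal weight
  and a maximizing staircase is a geodesic (a.s. unique for fixed endpoints).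
* In the dynamical model, for each `(i,k) ∈ ℤ²` the Brownian increment
  `x ↦ W_k(x+i) - W_k(i)`, `x ∈ [0,1]`, is resampled to an independent fresh standard
  Brownian motion at the ring times of an independent rate-one Poisson clock.
-/

open MeasureTheory ProbabilityTheory Set
open scoped ENNReal NNReal

noncomputable section

namespace BLPP

/-- `z` encodes a staircase from `(a, m)` to `(b, n)`:  it is nondecreasing on
`[[m-1, n]]` with `z (m-1) = a` and `z n = b`. -/
def IsStaircase (a : ℝ) (m : ℤ) (b : ℝ) (n : ℤ) (z : ℤ → ℝ) : Prop :=
  m ≤ n ∧ z (m - 1) = a ∧ z n = b ∧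
    ∀ i j : ℤ, m - 1 ≤ i → i ≤ j → j ≤ n → z i ≤ z j

/-- The weight `∑_{i=m}^n (W_i(z_i) - W_i(z_{i-1}))` of a staircase. -/
def wgt (W : ℤ → ℝ → ℝ) (m n : ℤ) (z : ℤ → ℝ) : ℝ :=
  ∑ i ∈ Finset.Icc m n, (W i (z i) - W i (z (i - 1)))

/-- The Brownian last passage time `T_{(a,m)}^{(b,n)}`. -/
def lpt (W : ℤ → ℝ → ℝ) (a : ℝ) (m : ℤ) (b : ℝ) (n : ℤ) : ℝ :=
  sSup {w | ∃ z, IsStaircase a m b n z ∧ w = wgt W m n z}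

/-- `z` is a geodesic (weight-maximizing staircase) from `(a,m)` to `(b,n)`. -/
def IsGeodesic (W : ℤ → ℝ → ℝ) (a : ℝ) (m : ℤ) (b : ℝ) (n : ℤ) (z : ℤ → ℝ) : Prop :=
  IsStaircase a m b n z ∧ wgt W m n z = lpt W a m b n

/-- The trace of a staircase in the plane: the union of its horizontal segments
`[z_{i-1}, z_i] × {i}` and vertical segments `{z_i} × [i, i+1]`. -/
def trace (m n : ℤ) (z : ℤ → ℝ) : Set (ℝ × ℝ) :=
  {p | ∃ i : ℤ, m ≤ i ∧ i ≤ n ∧ p.2 = (i : ℝ) ∧ z (i - 1) ≤ p.1 ∧ p.1 ≤ z i} ∪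
  {p | ∃ i : ℤ, m ≤ i ∧ i ≤ n - 1 ∧ p.1 = z i ∧ (i : ℝ) ≤ p.2 ∧ p.2 ≤ (i : ℝ) + 1}

/-- The union of the traces of all geodesics from `(a,m)` to `(b,n)`; by a.s. uniqueness
this is a.s. the trace of the geodesic. -/
def geodTrace (W : ℤ → ℝ → ℝ) (a : ℝ) (m : ℤ) (b : ℝ) (n : ℤ) : Set (ℝ × ℝ) :=
  {p | ∃ z, IsGeodesic W a m b n z ∧ p ∈ trace m n z}

/-- The coarse-graining of a planar set:
`Coarse(K) = {(i,m) ∈ ℤ² : ([i,i+1] × {m}) ∩ K ≠ ∅}`. -/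
def coarse (K : Set (ℝ × ℝ)) : Set (ℤ × ℤ) :=
  {im | ∃ u : ℝ, (im.1 : ℝ) ≤ u ∧ u ≤ (im.1 : ℝ) + 1 ∧ (u, (im.2 : ℝ)) ∈ K}

/-- `ℳ_p^q = {(i,m) ∈ ℤ² : ∃ w ∈ [i,i+1] × {m}, p ≤ w ≤ q}`. -/
def mGrid (p q : ℝ × ℝ) : Set (ℤ × ℤ) :=
  {im | ∃ u : ℝ, (im.1 : ℝ) ≤ u ∧ u ≤ (im.1 : ℝ) + 1 ∧
    p.1 ≤ u ∧ u ≤ q.1 ∧ p.2 ≤ (im.2 : ℝ) ∧ (im.2 : ℝ) ≤ q.2}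

/-- `IsStaticBLPP P W` expresses that under `P` the family `W` consists of i.i.d. two-sided
standard Brownian motions: static Brownian LPP. -/
structure IsStaticBLPP {Ω : Type} [MeasurableSpace Ω] (P : Measure Ω)
    (W : ℤ → Ω → ℝ → ℝ) : Prop where
  prob : IsProbabilityMeasure P
  meas : ∀ k u, Measurable fun x => W k x u
  cont : ∀ k x, Continuous (W k x)
  start : ∀ k x, W k x 0 = 0
  /-- Gaussian increments of the right variance … -/
  gauss : ∀ k s t, ∀ h : s ≤ t,
    P.map (fun x => W k x t - W k x s) = gaussianReal 0 ⟨t - s, sub_nonneg.mpr h⟩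
  /-- … independent over disjoint time intervals, … -/
  indep_incr : ∀ (k : ℤ) (s : ℕ → ℝ), Monotone s →
    iIndepFun (fun i x => W k x (s (i + 1)) - W k x (s i)) P
  /-- … and the lines are mutually independent. -/
  indep_lines : iIndepFun (fun k : ℤ => fun x => fun u : ℝ => W k x u) P

/-- `IsDynBLPP P W clock` expresses that `(W t)_{t ∈ ℝ}` is dynamical Brownian LPP: each
`(i,k) ∈ ℤ²` carries an independent rate-one Poisson clock (with ring times `clock (i,k)`),
and at each ring the Brownian increment `u ↦ W_k(i+u) - W_k(i)`, `u ∈ [0,1]`, is replaced by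
an independent fresh standard Brownian motion on `[0,1]`.  For each fixed `t` the slice
`W t` is a family of i.i.d. two-sided standard Brownian motions and the process is
stationary in `t`. -/
structure IsDynBLPP {Ω : Type} [MeasurableSpace Ω] (P : Measure Ω)
    (W : ℝ → ℤ → Ω → ℝ → ℝ) (clock : ℤ × ℤ → Ω → Set ℝ) : Prop where
  prob : IsProbabilityMeasure P
  /-- every time slice is a static Brownian LPP environment; -/
  slice : ∀ t : ℝ, IsStaticBLPP P (W t)
  /-- each clock rings finitely often in bounded intervals, … -/
  clock_fin : ∀ ik x s t, (clock ik x ∩ Set.Ioc s t).Finite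
  /-- … its ring counts are Poisson with mean the length of the interval, … -/
  clock_law : ∀ ik s t, s ≤ t → ∀ j : ℕ,
    P {x | (clock ik x ∩ Set.Ioc s t).ncard = j}
      = ENNReal.ofReal (Real.exp (-(t - s)) * (t - s) ^ j / j.factorial)
  /-- … and ring counts over disjoint space-time blocks are independent. -/
  clock_indep : ∀ (J : ℕ) (site : Fin J → ℤ × ℤ) (a b : Fin J → ℝ),
    (∀ i j, i ≠ j → site i ≠ site j ∨ Set.Ioc (a i) (b i) ∩ Set.Ioc (a j) (b j) = ∅) →
    iIndepFun
      (fun i x => (clock (site i) x ∩ Set.Ioc (a i) (b i)).ncard) P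
  /-- The increment at `(i,k)` only changes when the clock at `(i,k)` rings. -/
  incr_const : ∀ (ik : ℤ × ℤ) x s t, s ≤ t → clock ik x ∩ Set.Ioc s t = ∅ →
    ∀ u ∈ Set.Icc (0 : ℝ) 1,
      W t ik.2 x ((ik.1 : ℝ) + u) - W t ik.2 x (ik.1 : ℝ)
        = W s ik.2 x ((ik.1 : ℝ) + u) - W s ik.2 x (ik.1 : ℝ)
  /-- The increment trajectories at distinct `(i,k)` are independent. -/
  incr_indep : iIndepFun
    (fun ik : ℤ × ℤ => fun x => fun p : ℝ × Set.Icc (0 : ℝ) 1 =>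
      W p.1 ik.2 x ((ik.1 : ℝ) + (p.2 : ℝ)) - W p.1 ik.2 x (ik.1 : ℝ)) P
  /-- The dynamics is stationary in time. -/
  stationary : ∀ s : ℝ,
    P.map (fun x => fun p : ℝ × ℤ × ℝ => W (p.1 + s) p.2.1 x p.2.2)
      = P.map (fun x => fun p : ℝ × ℤ × ℝ => W p.1 p.2.1 x p.2.2)
  /-- When a clock rings, the corresponding increment is resampled to an independent fresh
  standard Brownian motion on `[0,1]`, independently of the past of the process. -/
  refresh : ∀ (ik : ℤ × ℤ) (s t : ℝ), s < t → ∀ E : Set Ω,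
    MeasurableSet[MeasurableSpace.comap
      (fun x => fun p : {r : ℝ // r ≤ s} × ℤ × ℝ => W p.1.1 p.2.1 x p.2.2) inferInstance] E →
    ∀ (J : ℕ) (u : Fin J → ℝ) (B : Fin J → Set ℝ),
      (∀ a, u a ∈ Set.Icc (0 : ℝ) 1) → (∀ a, MeasurableSet (B a)) →
      P (E ∩ {x | (clock ik x ∩ Set.Ioc s t).Nonempty} ∩
          {x | ∀ a, W t ik.2 x ((ik.1 : ℝ) + u a) - W t ik.2 x (ik.1 : ℝ) ∈ B a})
        = P (E ∩ {x | (clock ik x ∩ Set.Ioc s t).Nonempty}) *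
            P {x | ∀ a, W 0 0 x (u a) ∈ B a}

/-- The environment just before time `r` (the dynamics is piecewise constant in time, so
this is the left limit in the time variable). -/
def leftW (W : ℝ → ℤ → ℝ → ℝ) (r : ℝ) : ℤ → ℝ → ℝ :=
  fun k u => Function.leftLim (fun s => W s k u) r

/-- A bi-infinite staircase in the plane: a maximal chain for the coordinatewise order.
`IsBigeodesic W Ξ` states moreover that every finite segment of `Ξ` between points of
`ℝ × ℤ` is a geodesic: a bigeodesic for the BLPP with environment `W`. -/
def IsBigeodesic (W : ℤ → ℝ → ℝ) (Ξ : Set (ℝ × ℝ)) : Prop :=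
  IsMaxChain (fun p q : ℝ × ℝ => p ≤ q) Ξ ∧
  ∀ (a b : ℝ) (m n : ℤ), (a, (m : ℝ)) ∈ Ξ → (b, (n : ℝ)) ∈ Ξ → a ≤ b → m ≤ n →
    ∃ z : ℤ → ℝ, IsStaircase a m b n z ∧ trace m n z ⊆ Ξ ∧ wgt W m n z = lpt W a m b n

/-- A trivial bi-infinite path: one which is entirely horizontal or entirely vertical. -/
def IsTrivialPath (Ξ : Set (ℝ × ℝ)) : Prop :=
  (∃ c : ℝ, Ξ ⊆ {p | p.2 = c}) ∨ ∃ c : ℝ, Ξ ⊆ {p | p.1 = c}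

/-- An (unbounded) set `A ⊆ ℝ²` is `θ`-directed if along every sequence of points of `A`
whose second coordinates tend to infinity in absolute value, the ratio of the coordinates
tends to `θ`. -/
def ThetaDirected (θ : ℝ) (A : Set (ℝ × ℝ)) : Prop :=
  ∀ u : ℕ → ℝ × ℝ, (∀ j, u j ∈ A) →
    Filter.Tendsto (fun j => |(u j).2|) Filter.atTop Filter.atTop →
    Filter.Tendsto (fun j => (u j).1 / (u j).2) Filter.atTop (nhds θ)

/-- The hitset `HitSet_{K₁}^{K₂,[s,t]}(K)`: the union, over all `p ∈ K₁ ∩ (ℝ × ℤ)`,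
`q ∈ K₂ ∩ (ℝ × ℤ)`, all times `r ∈ [s,t]` and all geodesics `Γ_p^{q,r}`, of
`Coarse(Γ_p^{q,r} ∩ K)`. -/
def hitSet (W : ℝ → ℤ → ℝ → ℝ) (K₁ K₂ K : Set (ℝ × ℝ)) (s t : ℝ) : Set (ℤ × ℤ) :=
  {im | ∃ r ∈ Set.Icc s t, ∃ (a b : ℝ) (m n : ℤ),
    (a, (m : ℝ)) ∈ K₁ ∧ (b, (n : ℝ)) ∈ K₂ ∧
    ∃ z, IsGeodesic (W r) a m b n z ∧
      ∃ u : ℝ, (im.1 : ℝ) ≤ u ∧ u ≤ (im.1 : ℝ) + 1 ∧ (u, (im.2 : ℝ)) ∈ trace m n z ∩ K}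

/-- `𝒯_p^{q,[s,t]}`: the set of times in `[s,t]` at which some clock in `ℳ_p^q` rings. -/
def resampleTimes (clock : ℤ × ℤ → Set ℝ) (p q : ℝ × ℝ) (s t : ℝ) : Set ℝ :=
  {r | r ∈ Set.Icc s t ∧ ∃ im ∈ mGrid p q, r ∈ clock im}

/-- The number of geodesic switches
`Switch_p^{q,[s,t]}(K) = ∑_{r ∈ 𝒯_p^{q,[s,t]}} |Coarse(K ∩ Γ_p^{q,r}) \ Coarse(K ∩ Γ_p^{q,r⁻})|`,
where `Γ_p^{q,r⁻}`/`Γ_p^{q,r}` are the geodesics just before/after the resampling at `r`. -/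
def switch (W : ℝ → ℤ → ℝ → ℝ) (clock : ℤ × ℤ → Set ℝ) (a : ℝ) (m : ℤ) (b : ℝ) (n : ℤ)
    (K : Set (ℝ × ℝ)) (s t : ℝ) : ℝ :=
  ∑ᶠ r ∈ resampleTimes clock (a, (m : ℝ)) (b, (n : ℝ)) s t,
    (((coarse (K ∩ geodTrace (W r) a m b n) \
       coarse (K ∩ geodTrace (leftW W r) a m b n)).ncard : ℝ))

/-- The vertical extent `|A|_vert` of a planar set. -/
def vertExtent (A : Set (ℝ × ℝ)) : ℝ :=
  sInf {d | ∃ a b : ℝ, d = b - a ∧ ∀ p ∈ A, a ≤ p.2 ∧ p.2 ≤ b}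

/-- `Loc^{l₁,l₂,m}(A)`: the set `A` is contained in `ℝ × [m-l₂, m+l₂]` and its vertical
extent lies in `[l₁, l₂]`. -/
def Loc (l₁ l₂ : ℝ) (m : ℤ) (A : Set (ℝ × ℝ)) : Prop :=
  (∀ p ∈ A, (m : ℝ) - l₂ ≤ p.2 ∧ p.2 ≤ (m : ℝ) + l₂) ∧
    l₁ ≤ vertExtent A ∧ vertExtent A ≤ l₂

/-- The horizontal segment `[m - |m|^{2/3}, m + |m|^{2/3}] × {m}`. -/
def Lseg (m : ℤ) : Set (ℝ × ℝ) :=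
  {p | p.2 = (m : ℝ) ∧ (m : ℝ) - |(m : ℝ)| ^ ((2 : ℝ) / 3) ≤ p.1 ∧
    p.1 ≤ (m : ℝ) + |(m : ℝ)| ^ ((2 : ℝ) / 3)}

/-- The region `ℝ × ([a,b] ∩ ℤ)` of the plane: points on integer levels in `[a, b]`. -/
def levelBand (a b : ℝ) : Set (ℝ × ℝ) :=
  {p | (∃ m : ℤ, p.2 = (m : ℝ)) ∧ a ≤ p.2 ∧ p.2 ≤ b}

end BLPP

namespace BLPP

/-- `IsFreshBM P fresh W`: under `P`, `fresh` is a standard Brownian motion on `[0,1]`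
independent of the whole Brownian family `W`. -/
structure IsFreshBM {Ω : Type} [MeasurableSpace Ω] (P : Measure Ω)
    (fresh : Ω → ℝ → ℝ) (W : ℤ → Ω → ℝ → ℝ) : Prop where
  meas : ∀ u, Measurable fun x => fresh x u
  cont : ∀ x, Continuous (fresh x)
  start : ∀ x, fresh x 0 = 0
  gauss : ∀ s t, 0 ≤ s → ∀ h : s ≤ t, t ≤ 1 →
    P.map (fun x => fresh x t - fresh x s) = gaussianReal 0 ⟨t - s, sub_nonneg.mpr h⟩
  incr_indep : ∀ s : ℕ → ℝ, Monotone s → (∀ i, s i ∈ Set.Icc (0 : ℝ) 1) →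
    iIndepFun (fun i x => fresh x (s (i + 1)) - fresh x (s i)) P
  indep : IndepFun (fun x => fresh x) (fun x => fun p : ℤ × ℝ => W p.1 x p.2) P

/-- Replace the increment of `w` over `[i, i+1]` by the path `f` (run over `[0,1]`), leaving
all other increments of `w` unchanged. -/
def tweak (w : ℝ → ℝ) (i : ℤ) (f : ℝ → ℝ) : ℝ → ℝ := fun u =>
  if u ≤ (i : ℝ) then w u
  else if u ≤ (i : ℝ) + 1 then w i + f (u - i)
  else w u - w ((i : ℝ) + 1) + w i + f 1

end BLPP

/-!
Only line `m` changes, and it moves by at most `sup |X̃| + sup_{s ∈ [0,1]} |W_m(i+s) - W_m(i)|`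
uniformly; a staircase sees line `m` through two of its values, so the last passage times
differ by at most twice that. Both suprema are suprema of a Brownian motion over `[0,1]`,
and their Gaussian tail follows from a union bound over dyadic increments (chaining).
-/

namespace ProbabilityTheory

open Real

lemma hasSubgaussianMGF_id_gaussianReal (v : ℝ≥0) : HasSubgaussianMGF id v (gaussianReal 0 v) :=
  ⟨integrable_exp_mul_gaussianReal, fun t => by simp [mgf_id_gaussianReal]⟩

lemma gaussianReal_abs_ge_le (v : ℝ≥0) {b : ℝ} (hb : 0 ≤ b) :
    gaussianReal 0 v {y | b ≤ |y|} ≤ ENNReal.ofReal (2 * exp (-b ^ 2 / (2 * v))) := by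
  have h := hasSubgaussianMGF_id_gaussianReal v
  have hsplit : {y : ℝ | b ≤ |y|} = {y | b ≤ id y} ∪ {y | b ≤ (-id) y} := by
    ext y
    simp [le_abs]
  calc gaussianReal 0 v {y | b ≤ |y|}
      ≤ gaussianReal 0 v {y | b ≤ id y} + gaussianReal 0 v {y | b ≤ (-id) y} := by
        rw [hsplit]
        exact measure_union_le _ _
    _ = ENNReal.ofReal ((gaussianReal 0 v).real {y | b ≤ id y}) +
          ENNReal.ofReal ((gaussianReal 0 v).real {y | b ≤ (-id) y}) := by
        rw [ofReal_measureReal, ofReal_measureReal]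
    _ ≤ ENNReal.ofReal (exp (-b ^ 2 / (2 * v))) + ENNReal.ofReal (exp (-b ^ 2 / (2 * v))) :=
        add_le_add (ENNReal.ofReal_le_ofReal (h.measure_ge_le hb))
          (ENNReal.ofReal_le_ofReal (h.neg.measure_ge_le hb))
    _ = ENNReal.ofReal (2 * exp (-b ^ 2 / (2 * v))) := by
        rw [← ENNReal.ofReal_add (by positivity) (by positivity), ← two_mul]

end ProbabilityTheory

namespace BLPP

open Real Filter Topology

lemma abs_apply_dyadic_le_of_abs_incr_le {h : ℝ → ℝ} (h0 : h 0 = 0) {δ : ℕ → ℝ}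
    (hinc : ∀ j k : ℕ, k < 2 ^ j → |h ((k + 1) / 2 ^ j) - h (k / 2 ^ j)| ≤ δ j) :
    ∀ n k : ℕ, k ≤ 2 ^ n → |h (k / 2 ^ n)| ≤ ∑ j ∈ Finset.range (n + 1), δ j := by
  have hδ : ∀ j, 0 ≤ δ j := fun j => (abs_nonneg _).trans (hinc j 0 (by positivity))
  intro n
  induction n with
  | zero =>
    intro k hk
    have h1 := hinc 0 0 one_pos
    interval_cases k <;> simp_all
  | succ n ih =>
    intro k hk
    have hhalf : ∀ k' : ℕ, ((2 * k' : ℕ) : ℝ) / 2 ^ (n + 1) = k' / 2 ^ n := fun k' => by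
      push_cast
      rw [pow_succ]
      field_simp
    rw [Finset.sum_range_succ]
    obtain ⟨k', rfl | rfl⟩ := Nat.even_or_odd' k
    · rw [hhalf]
      linarith [ih k' (by omega), hδ (n + 1)]
    · have hincr := hinc (n + 1) (2 * k') (by omega)
      rw [hhalf] at hincr
      push_cast at hincr ⊢
      linarith [ih k' (by omega),
        abs_sub_abs_le_abs_sub (h ((2 * k' + 1) / 2 ^ (n + 1))) (h (k' / 2 ^ n))]

lemma abs_le_of_abs_dyadic_incr_le {h : ℝ → ℝ} (hc : Continuous h) (h0 : h 0 = 0) {ε q : ℝ}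
    (hq0 : 0 ≤ q) (hq1 : q < 1)
    (hinc : ∀ j k : ℕ, k < 2 ^ j → |h ((k + 1) / 2 ^ j) - h (k / 2 ^ j)| ≤ ε * q ^ j)
    {s : ℝ} (hs : s ∈ Icc (0 : ℝ) 1) : |h s| ≤ ε / (1 - q) := by
  have hε : 0 ≤ ε := by simpa using (abs_nonneg _).trans (hinc 0 0 one_pos)
  have hdyadic : ∀ n : ℕ, |h (⌊s * 2 ^ n⌋₊ / 2 ^ n)| ≤ ε / (1 - q) := by
    intro n
    have hfloor : ⌊s * 2 ^ n⌋₊ ≤ 2 ^ n := Nat.floor_le_of_le (by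
      push_cast
      nlinarith [hs.2, pow_pos (two_pos (α := ℝ)) n])
    calc |h (⌊s * 2 ^ n⌋₊ / 2 ^ n)| ≤ ∑ j ∈ Finset.range (n + 1), ε * q ^ j :=
          abs_apply_dyadic_le_of_abs_incr_le h0 hinc n _ hfloor
      _ = ε * ∑ j ∈ Finset.Ico 0 (n + 1), q ^ j := by rw [← Finset.mul_sum, Finset.range_eq_Ico]
      _ ≤ ε * (q ^ 0 / (1 - q)) := by gcongr; exact geom_sum_Ico_le_of_lt_one hq0 hq1
      _ = ε / (1 - q) := by ring
  have hlim : Tendsto (fun n : ℕ => (⌊s * 2 ^ n⌋₊ : ℝ) / 2 ^ n) atTop (𝓝 s) :=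
    (tendsto_nat_floor_mul_div_atTop hs.1).comp (tendsto_pow_atTop_atTop_of_one_lt one_lt_two)
  exact le_of_tendsto (((continuous_abs.comp hc).tendsto s).comp hlim)
    (Eventually.of_forall hdyadic)

lemma two_pow_mul_exp_le {x : ℝ} (hx : exp (-x / 8) ≤ 1 / 4) (j : ℕ) :
    2 ^ j * (2 * exp (-x * (9 / 8) ^ j)) ≤ 2 * exp (-x) * (1 / 2) ^ j := by
  have hx0 : 0 ≤ x := by linarith [exp_lt_one_iff.mp (hx.trans_lt (by norm_num))]
  have hbernoulli : 1 + j * (1 / 8 : ℝ) ≤ (9 / 8) ^ j := by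
    have := one_add_mul_le_pow (by norm_num : (-2 : ℝ) ≤ 1 / 8) j
    norm_num at this ⊢
    linarith
  have hexp : exp (-x * (9 / 8) ^ j) ≤ exp (-x) * (1 / 4) ^ j :=
    calc exp (-x * (9 / 8) ^ j) ≤ exp (-x + j * (-x / 8)) := by
          rw [exp_le_exp]
          nlinarith
      _ = exp (-x) * exp (-x / 8) ^ j := by rw [exp_add, exp_nat_mul]
      _ ≤ exp (-x) * (1 / 4) ^ j := by gcongr
  calc 2 ^ j * (2 * exp (-x * (9 / 8) ^ j)) ≤ 2 ^ j * (2 * (exp (-x) * (1 / 4) ^ j)) := by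
        gcongr
    _ = 2 * exp (-x) * (2 * (1 / 4)) ^ j := by rw [mul_pow]; ring
    _ = 2 * exp (-x) * (1 / 2) ^ j := by norm_num

lemma tsum_two_pow_mul_exp_le {x : ℝ} (hx : exp (-x / 8) ≤ 1 / 4) :
    ∑' j : ℕ, ENNReal.ofReal (2 ^ j * (2 * exp (-x * (9 / 8) ^ j))) ≤
      ENNReal.ofReal (4 * exp (-x)) :=
  calc ∑' j : ℕ, ENNReal.ofReal (2 ^ j * (2 * exp (-x * (9 / 8) ^ j)))
      ≤ ∑' j : ℕ, ENNReal.ofReal (2 * exp (-x) * (1 / 2) ^ j) :=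
        ENNReal.tsum_le_tsum fun j => ENNReal.ofReal_le_ofReal (two_pow_mul_exp_le hx j)
    _ = ENNReal.ofReal (∑' j : ℕ, 2 * exp (-x) * (1 / 2) ^ j) :=
        (ENNReal.ofReal_tsum_of_nonneg (fun _ => by positivity)
          (summable_geometric_two.mul_left _)).symm
    _ = ENNReal.ofReal (4 * exp (-x)) := by
        rw [tsum_mul_left, tsum_geometric_two]
        ring_nf


/-- A Brownian motion on `[0,1]` without the independence of increments, which the chaining
argument does not need. -/
structure HasGaussianIncrements {Ω : Type*} [MeasurableSpace Ω] (P : Measure Ω)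
    (Y : Ω → ℝ → ℝ) : Prop where
  meas : ∀ u, Measurable fun x => Y x u
  cont : ∀ x, Continuous (Y x)
  start : ∀ x, Y x 0 = 0
  gauss : ∀ s t : ℝ, 0 ≤ s → ∀ h : s ≤ t, t ≤ 1 →
    P.map (fun x => Y x t - Y x s) = gaussianReal 0 ⟨t - s, sub_nonneg.mpr h⟩

section GaussianIncrements

variable {Ω : Type*} [MeasurableSpace Ω] {P : Measure Ω} {Y : Ω → ℝ → ℝ}

lemma HasGaussianIncrements.measure_abs_dyadic_incr_ge_le (hY : HasGaussianIncrements P Y)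
    {j k : ℕ} (hk : k < 2 ^ j) {b : ℝ} (hb : 0 ≤ b) :
    P {x | b ≤ |Y x ((k + 1) / 2 ^ j) - Y x (k / 2 ^ j)|} ≤
      ENNReal.ofReal (2 * exp (-(b ^ 2 * 2 ^ j) / 2)) := by
  have hpow : (0 : ℝ) < 2 ^ j := by positivity
  have hle : (k : ℝ) / 2 ^ j ≤ (k + 1) / 2 ^ j := by gcongr; linarith
  have hle_one : ((k : ℝ) + 1) / 2 ^ j ≤ 1 := by
    rw [div_le_one hpow]
    exact_mod_cast hk
  have hincr : Measurable fun x => Y x ((k + 1) / 2 ^ j) - Y x (k / 2 ^ j) :=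
    (hY.meas _).sub (hY.meas _)
  calc P {x | b ≤ |Y x ((k + 1) / 2 ^ j) - Y x (k / 2 ^ j)|}
      = P.map (fun x => Y x ((k + 1) / 2 ^ j) - Y x (k / 2 ^ j)) {y | b ≤ |y|} :=
        (Measure.map_apply hincr (measurableSet_le measurable_const measurable_abs)).symm
    _ ≤ _ := by
        rw [hY.gauss _ _ (by positivity) hle hle_one]
        refine (gaussianReal_abs_ge_le _ hb).trans_eq ?_
        congr 3
        change -b ^ 2 / (2 * ((k + 1) / 2 ^ j - k / 2 ^ j)) = _
        field_simp
        ring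

lemma HasGaussianIncrements.measure_exists_abs_ge_le_tsum (hY : HasGaussianIncrements P Y)
    {a : ℝ} (ha : 0 < a) :
    P {x | ∃ s ∈ Icc (0 : ℝ) 1, a ≤ |Y x s|} ≤
      ∑' j : ℕ, ENNReal.ofReal (2 ^ j * (2 * exp (-(a ^ 2 / 128) * (9 / 8) ^ j))) := by
  set E : ℕ → ℕ → Set Ω := fun j k =>
    {x | a / 8 * (3 / 4) ^ j ≤ |Y x ((k + 1) / 2 ^ j) - Y x (k / 2 ^ j)|}
  -- the thresholds `a / 8 * (3 / 4) ^ j` sum to `a / 2 < a`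
  have hcover : {x | ∃ s ∈ Icc (0 : ℝ) 1, a ≤ |Y x s|} ⊆ ⋃ j, ⋃ k : Fin (2 ^ j), E j k := by
    rintro x ⟨s, hs, has⟩
    by_contra hx
    simp only [E, mem_iUnion, mem_ofPred_eq, not_exists, not_le] at hx
    have := abs_le_of_abs_dyadic_incr_le (hY.cont x) (hY.start x) (by norm_num) (by norm_num)
      (fun j k hk => (hx j ⟨k, hk⟩).le) hs
    norm_num at this
    linarith
  refine (measure_mono hcover).trans <| (measure_iUnion_le _).trans <|
    ENNReal.tsum_le_tsum fun j => (measure_iUnion_le _).trans ?_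
  calc ∑' k : Fin (2 ^ j), P (E j k)
      ≤ ∑' _ : Fin (2 ^ j), ENNReal.ofReal (2 * exp (-((a / 8 * (3 / 4) ^ j) ^ 2 * 2 ^ j) / 2)) :=
        ENNReal.tsum_le_tsum fun k =>
          hY.measure_abs_dyadic_incr_ge_le k.isLt (by positivity)
    _ = ENNReal.ofReal (2 ^ j * (2 * exp (-(a ^ 2 / 128) * (9 / 8) ^ j))) := by
        rw [tsum_fintype, Finset.sum_const, Finset.card_univ, Fintype.card_fin, nsmul_eq_mul,
          ← ENNReal.ofReal_natCast, ← ENNReal.ofReal_mul (by positivity)]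
        congr 4
        · push_cast; ring
        · have h98 : (9 / 8 : ℝ) ^ j = ((3 / 4) ^ j) ^ 2 * 2 ^ j := by
            rw [← pow_right_comm, ← mul_pow]
            norm_num
          rw [h98]
          ring

theorem HasGaussianIncrements.measure_exists_abs_ge_le [IsProbabilityMeasure P]
    (hY : HasGaussianIncrements P Y) {a : ℝ} (ha : 0 < a) :
    P {x | ∃ s ∈ Icc (0 : ℝ) 1, a ≤ |Y x s|} ≤ ENNReal.ofReal (65536 * exp (-(a ^ 2 / 128))) := by
  -- the dyadic union bound converges only for large `a`; small `a` are absorbed by the constant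
  by_cases hx : exp (-(a ^ 2 / 128) / 8) ≤ 1 / 4
  · refine (hY.measure_exists_abs_ge_le_tsum ha).trans <|
      (tsum_two_pow_mul_exp_le hx).trans <| ENNReal.ofReal_le_ofReal ?_
    linarith [exp_pos (-(a ^ 2 / 128))]
  · refine prob_le_one.trans <| ENNReal.one_le_ofReal.mpr ?_
    have h8 : exp (-(a ^ 2 / 128)) = exp (-(a ^ 2 / 128) / 8) ^ 8 := by
      rw [← exp_nat_mul]
      ring_nf
    have := pow_lt_pow_left₀ (not_le.mp hx) (by norm_num) (by norm_num : 8 ≠ 0)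
    rw [h8]
    linarith

end GaussianIncrements

lemma abs_sSup_image_sub_le {α : Type*} {S : Set α} {f g : α → ℝ} {D : ℝ} (hD : 0 ≤ D)
    (hg : BddAbove (g '' S)) (hfg : ∀ z ∈ S, |f z - g z| ≤ D) :
    |sSup (f '' S) - sSup (g '' S)| ≤ D := by
  rcases S.eq_empty_or_nonempty with rfl | hS
  · simpa using hD
  have hf : BddAbove (f '' S) := by
    refine ⟨sSup (g '' S) + D, ?_⟩
    rintro _ ⟨z, hz, rfl⟩
    linarith [(abs_le.mp (hfg z hz)).2, le_csSup hg (mem_image_of_mem g hz)]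
  refine abs_sub_le_iff.mpr ⟨?_, ?_⟩ <;> rw [sub_le_iff_le_add]
  · refine csSup_le (hS.image f) ?_
    rintro _ ⟨z, hz, rfl⟩
    linarith [(abs_le.mp (hfg z hz)).2, le_csSup hg (mem_image_of_mem g hz)]
  · refine csSup_le (hS.image g) ?_
    rintro _ ⟨z, hz, rfl⟩
    linarith [(abs_le.mp (hfg z hz)).1, le_csSup hf (mem_image_of_mem f hz)]

lemma lpt_eq_sSup_image (W : ℤ → ℝ → ℝ) (a : ℝ) (m : ℤ) (b : ℝ) (n : ℤ) :
    lpt W a m b n = sSup (wgt W m n '' {z | IsStaircase a m b n z}) := by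
  simp only [lpt, image, mem_ofPred_eq, eq_comm]

lemma IsStaircase.mem_Icc {a b : ℝ} {m n : ℤ} {z : ℤ → ℝ} (hz : IsStaircase a m b n z)
    {j : ℤ} (hj₁ : m - 1 ≤ j) (hj₂ : j ≤ n) : z j ∈ Icc a b := by
  obtain ⟨-, hza, hzb, hmono⟩ := hz
  exact ⟨hza ▸ hmono _ _ le_rfl hj₁ hj₂, hzb ▸ hmono _ _ hj₁ hj₂ le_rfl⟩

lemma bddAbove_wgt_image {W : ℤ → ℝ → ℝ} (hW : ∀ k, Continuous (W k)) (a : ℝ) (m : ℤ) (b : ℝ)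
    (n : ℤ) : BddAbove (wgt W m n '' {z | IsStaircase a m b n z}) := by
  choose B hB using fun k => isCompact_Icc.exists_bound_of_continuousOn (hW k).continuousOn
    (s := Icc a b)
  refine ⟨∑ k ∈ Finset.Icc m n, 2 * B k, ?_⟩
  rintro _ ⟨z, hz, rfl⟩
  refine Finset.sum_le_sum fun k hk => ?_
  obtain ⟨hmk, hkn⟩ := Finset.mem_Icc.mp hk
  have h₁ := hB k _ (hz.mem_Icc (j := k) (by omega) hkn)
  have h₂ := hB k _ (hz.mem_Icc (j := k - 1) (by omega) (by omega))
  rw [Real.norm_eq_abs] at h₁ h₂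
  linarith [le_abs_self (W k (z k)), neg_abs_le (W k (z (k - 1)))]

lemma wgt_sub (W W' : ℤ → ℝ → ℝ) (m n : ℤ) (z : ℤ → ℝ) :
    wgt W' m n z - wgt W m n z = wgt (W' - W) m n z := by
  simp only [wgt, ← Finset.sum_sub_distrib, Pi.sub_apply]
  exact Finset.sum_congr rfl fun _ _ => by ring

lemma abs_wgt_le_of_eq_zero_of_ne {V : ℤ → ℝ → ℝ} {l : ℤ} {K : ℝ}
    (hV : ∀ k, k ≠ l → V k = 0) (hK : ∀ u, |V l u| ≤ K) (m n : ℤ) (z : ℤ → ℝ) :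
    |wgt V m n z| ≤ 2 * K := by
  have hK0 : 0 ≤ K := (abs_nonneg _).trans (hK 0)
  by_cases hl : l ∈ Finset.Icc m n
  · rw [wgt, Finset.sum_eq_single_of_mem l hl fun k _ hk => by simp [hV k hk]]
    linarith [abs_sub (V l (z l)) (V l (z (l - 1))), hK (z l), hK (z (l - 1))]
  · rw [wgt, Finset.sum_eq_zero fun k hk => by simp [hV k (ne_of_mem_of_not_mem hk hl)]]
    simpa using hK0

theorem abs_lpt_sub_le_of_eq_of_ne {W W' : ℤ → ℝ → ℝ} (hW : ∀ k, Continuous (W k)) {l : ℤ}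
    (hoff : ∀ k, k ≠ l → W' k = W k) {K : ℝ} (hK : ∀ u, |W' l u - W l u| ≤ K)
    (a : ℝ) (m : ℤ) (b : ℝ) (n : ℤ) :
    |lpt W' a m b n - lpt W a m b n| ≤ 2 * K := by
  rw [lpt_eq_sSup_image, lpt_eq_sSup_image]
  refine abs_sSup_image_sub_le (by linarith [(abs_nonneg _).trans (hK 0)])
    (bddAbove_wgt_image hW a m b n) fun z _ => ?_
  rw [wgt_sub]
  exact abs_wgt_le_of_eq_zero_of_ne (fun k hk => by simp [hoff k hk]) hK m n z

lemma abs_tweak_sub_le {w f : ℝ → ℝ} {i : ℤ} {F G : ℝ} (hF : ∀ s ∈ Icc (0 : ℝ) 1, |f s| ≤ F)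
    (hG : ∀ s ∈ Icc (0 : ℝ) 1, |w (i + s) - w i| ≤ G) (u : ℝ) :
    |tweak w i f u - w u| ≤ F + G := by
  have key : ∀ s ∈ Icc (0 : ℝ) 1, |f s - (w (i + s) - w i)| ≤ F + G := fun s hs =>
    (abs_sub _ _).trans (add_le_add (hF s hs) (hG s hs))
  unfold tweak
  split_ifs with h₁ h₂
  · simpa using (abs_nonneg _).trans (key 0 ⟨le_rfl, zero_le_one⟩)
  · convert key (u - i) ⟨by linarith, by linarith⟩ using 2
    rw [add_sub_cancel]
    ring
  · convert key 1 ⟨zero_le_one, le_rfl⟩ using 2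
    ring

theorem abs_lpt_tweak_sub_le {W : ℤ → ℝ → ℝ} (hW : ∀ k, Continuous (W k)) {l i : ℤ}
    {f : ℝ → ℝ} {F G : ℝ} (hF : ∀ s ∈ Icc (0 : ℝ) 1, |f s| ≤ F)
    (hG : ∀ s ∈ Icc (0 : ℝ) 1, |W l (i + s) - W l i| ≤ G) (a : ℝ) (m : ℤ) (b : ℝ) (n : ℤ) :
    |lpt (fun k => if k = l then tweak (W l) i f else W k) a m b n - lpt W a m b n| ≤
      2 * (F + G) :=
  abs_lpt_sub_le_of_eq_of_ne hW (l := l) (fun k hk => if_neg hk)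
    (fun u => by simpa using abs_tweak_sub_le hF hG u) a m b n

lemma IsStaticBLPP.hasGaussianIncrements_shift {Ω : Type} [MeasurableSpace Ω] {P : Measure Ω}
    {W : ℤ → Ω → ℝ → ℝ} (hW : IsStaticBLPP P W) (m : ℤ) (i : ℝ) :
    HasGaussianIncrements P fun x s => W m x (i + s) - W m x i where
  meas _ := (hW.meas m _).sub (hW.meas m _)
  cont x := ((hW.cont m x).comp (continuous_const.add continuous_id)).sub continuous_const
  start x := by simp
  gauss s t _ hst _ := by
    convert hW.gauss m (i + s) (i + t) (by linarith) using 2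
    · simp only [sub_sub_sub_cancel_right]
    · simp

lemma IsFreshBM.hasGaussianIncrements {Ω : Type} [MeasurableSpace Ω] {P : Measure Ω}
    {fresh : Ω → ℝ → ℝ} {W : ℤ → Ω → ℝ → ℝ} (hfresh : IsFreshBM P fresh W) :
    HasGaussianIncrements P fresh :=
  ⟨hfresh.meas, hfresh.cont, hfresh.start, hfresh.gauss⟩

end BLPP

open BLPP in
/-- Lemma 5.30 of the paper.  There are universal constants `C, c > 0`
such that for any static BLPP `T` (built from `W`) and the BLPP `T̃` obtained by resampling
the single increment of `W_m` over `[i, i+1]` to an independent fresh standard Brownian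
motion, one has `P(|T̃_𝟎^𝐧 - T_𝟎^𝐧| ≥ r) ≤ C e^{-c r²}` for all `i, m, n` and `r > 0`. -/
theorem single_resampling_stability
    : ∃ C > (0 : ℝ), ∃ c > (0 : ℝ),
      ∀ (Ω : Type) (_ : MeasurableSpace Ω) (P : Measure Ω)
        (W : ℤ → Ω → ℝ → ℝ) (fresh : Ω → ℝ → ℝ),
        IsStaticBLPP P W → IsFreshBM P fresh W →
        ∀ (i m : ℤ) (n : ℕ) (r : ℝ), 0 < r →
          P {x | r ≤
              |lpt (fun k => if k = m then tweak (W m x) i (fresh x) else W k x)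
                  0 0 (n : ℝ) (n : ℤ) -
               lpt (fun k => W k x) 0 0 (n : ℝ) (n : ℤ)|}
            ≤ ENNReal.ofReal (C * Real.exp (-c * r ^ 2)) := by
  refine ⟨131072, by norm_num, 1 / 8192, by norm_num, ?_⟩
  intro Ω _ P W fresh hW hfresh i m n r hr
  have := hW.prob
  set A := {x | ∃ s ∈ Icc (0 : ℝ) 1, r / 8 ≤ |fresh x s|}
  set B := {x | ∃ s ∈ Icc (0 : ℝ) 1, r / 8 ≤ |W m x (i + s) - W m x i|}
  have hcover : {x | r ≤
      |lpt (fun k => if k = m then tweak (W m x) i (fresh x) else W k x) 0 0 (n : ℝ) (n : ℤ) -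
        lpt (fun k => W k x) 0 0 (n : ℝ) (n : ℤ)|} ⊆ A ∪ B := by
    intro x hx
    by_contra hAB
    simp only [A, B, mem_union, mem_ofPred_eq, not_or, not_exists, not_and, not_le] at hAB
    linarith [hx.trans (abs_lpt_tweak_sub_le (W := fun k => W k x) (fun k => hW.cont k x)
      (fun s hs => (hAB.1 s hs).le) (fun s hs => (hAB.2 s hs).le) 0 0 n n)]
  calc _ ≤ P A + P B := (measure_mono hcover).trans (measure_union_le _ _)
    _ ≤ ENNReal.ofReal (65536 * Real.exp (-((r / 8) ^ 2 / 128))) +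
          ENNReal.ofReal (65536 * Real.exp (-((r / 8) ^ 2 / 128))) :=
        add_le_add (hfresh.hasGaussianIncrements.measure_exists_abs_ge_le (by positivity))
          ((hW.hasGaussianIncrements_shift m i).measure_exists_abs_ge_le (by positivity))
    _ = ENNReal.ofReal (131072 * Real.exp (-(1 / 8192) * r ^ 2)) := by
        rw [← ENNReal.ofReal_add (by positivity) (by positivity)]
        ring_nf
end
end
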